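/- Let a₀, a₁, b ∈ ℝ with a₀² + a₁² + b² = 1. The partial transpose of the BC reduced state of the three-qubit state |Ψ⟩ = a₀|000⟩ + a₁|011⟩ + b|1⟩⊗(|01⟩+|10⟩)/√2 has characteristic polynomial factoring as (b²/2 + a₀a₁ − x)(b²/2 − a₀a₁ − x)(a₀²a₁² − b⁴/4 − (a₀² + a₁²)x + x²), and this polynomial has a negative root whenever |b| ≠ √(2|a₀a₁|) and a₀a₁ ≠ 0. -/

import Mathlib

open Matrix Polynomial

/-- Outer product |v⟩⟨v| of a vector. -/
noncomputable def outer {ι : Type*} (v : ι → ℂ) : Matrix ι ι ℂ :=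
  fun f g => v f * (starRingEnd ℂ) (v g)

/-- The three-qubit state |Ψ⟩ = a₀|000⟩ + a₁|011⟩ + b|1⟩⊗(|01⟩+|10⟩)/√2. -/
noncomputable def PsiVec (a0 a1 b : ℝ) : Fin 2 × Fin 2 × Fin 2 → ℂ :=
  fun p =>
    if p = (0,0,0) then ((a0 : ℝ) : ℂ)
    else if p = (0,1,1) then ((a1 : ℝ) : ℂ)
    else if p = (1,0,1) ∨ p = (1,1,0) then ((b / Real.sqrt 2 : ℝ) : ℂ)
    else 0

/-- Trace out subsystem A of a three-qubit matrix, giving the BC reduced state. -/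
noncomputable def trA (ρ : Matrix (Fin 2 × Fin 2 × Fin 2) (Fin 2 × Fin 2 × Fin 2) ℂ) :
    Matrix (Fin 2 × Fin 2) (Fin 2 × Fin 2) ℂ :=
  fun p q => ∑ k : Fin 2, ρ (k, p.1, p.2) (k, q.1, q.2)

/-- Partial transpose on the second factor of ℂ²⊗ℂ². -/
def ptranspose (M : Matrix (Fin 2 × Fin 2) (Fin 2 × Fin 2) ℂ) :
    Matrix (Fin 2 × Fin 2) (Fin 2 × Fin 2) ℂ :=
  fun a b => M (a.1, b.2) (b.1, a.2)

lemma key_charpoly (p q r c : ℂ) :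
    (!![p,0,0,c; 0,c,q,0; 0,q,c,0; c,0,0,r] : Matrix (Fin 4) (Fin 4) ℂ).charpoly =
    (C (c+q) - X) * (C (c-q) - X) * (C (p*r - c^2) - C (p+r)*X + X^2) := by
  rw [Matrix.charpoly]
  rw [show (!![p,0,0,c; 0,c,q,0; 0,q,c,0; c,0,0,r] : Matrix (Fin 4) (Fin 4) ℂ).charmatrix
    = !![X - C p, 0, 0, -C c; 0, X - C c, -C q, 0; 0, -C q, X - C c, 0; -C c, 0, 0, X - C r] by
    ext i j; fin_cases i <;> fin_cases j <;> simp [charmatrix_apply]]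
  rw [Matrix.det_succ_row_zero]
  simp [Fin.sum_univ_succ, Matrix.det_fin_three, Fin.castSucc, Fin.castAdd, Fin.castLE]
  simp [show Fin.succAbove (3:Fin 4) (2:Fin 3) = 2 from rfl]
  ring

lemma hsq (b : ℝ) : (b / Real.sqrt 2) * (b / Real.sqrt 2) = b^2/2 := by
  rw [div_mul_div_comm, Real.mul_self_sqrt (by norm_num)]; ring

lemma hsqC (b : ℝ) : (b:ℂ) / (Real.sqrt 2 : ℝ) * ((b:ℂ) / (Real.sqrt 2 : ℝ)) = ((b*b:ℝ):ℂ)/2 := by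
  have h2 : (Real.sqrt 2 : ℂ) * (Real.sqrt 2 : ℝ) = 2 := by
    norm_cast; rw [Real.mul_self_sqrt] <;> norm_num
  rw [div_mul_div_comm, h2]; push_cast; ring

lemma hA (a0 a1 b : ℝ) :
    (reindex finProdFinEquiv finProdFinEquiv (ptranspose (trA (outer (PsiVec a0 a1 b))))) =
    !![((a0^2:ℝ):ℂ), 0, 0, ((b^2/2:ℝ):ℂ);
       0, ((b^2/2:ℝ):ℂ), ((a0*a1:ℝ):ℂ), 0;
       0, ((a0*a1:ℝ):ℂ), ((b^2/2:ℝ):ℂ), 0;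
       ((b^2/2:ℝ):ℂ), 0, 0, ((a1^2:ℝ):ℂ)] := by
  ext i j
  fin_cases i <;> fin_cases j <;>
    simp [reindex, ptranspose, trA, outer, PsiVec, Fin.sum_univ_two, finProdFinEquiv,
      Prod.ext_iff, hsq, ← Complex.ofReal_mul, sq, Fin.divNat, Fin.modNat] <;>
    norm_num [hsqC, mul_comm, show ((3:Fin 4):ℕ) = 3 from rfl]

/-- The characteristic polynomial of ρ_BC^Γ factors as
(b²/2 + a₀a₁ − x)(b²/2 − a₀a₁ − x)(a₀²a₁² − b⁴/4 − (a₀²+a₁²)x + x²), and it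
has a negative root whenever |b| ≠ √(2|a₀a₁|) and a₀a₁ ≠ 0. -/
theorem stmt12 (a0 a1 b : ℝ) (hnorm : a0^2 + a1^2 + b^2 = 1) :
    ((ptranspose (trA (outer (PsiVec a0 a1 b)))).charpoly =
      (C ((b^2/2 + a0*a1 : ℝ) : ℂ) - X) * (C ((b^2/2 - a0*a1 : ℝ) : ℂ) - X) *
      (C ((a0^2*a1^2 - b^4/4 : ℝ) : ℂ) - C (((a0^2 + a1^2 : ℝ) : ℂ)) * X + X^2)) ∧
    (|b| ≠ Real.sqrt (2 * |a0 * a1|) → a0 * a1 ≠ 0 →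
      ∃ x : ℝ, x < 0 ∧
        (ptranspose (trA (outer (PsiVec a0 a1 b)))).charpoly.IsRoot (x : ℂ)) := by
  have h1 : (ptranspose (trA (outer (PsiVec a0 a1 b)))).charpoly =
      (C ((b^2/2 + a0*a1 : ℝ) : ℂ) - X) * (C ((b^2/2 - a0*a1 : ℝ) : ℂ) - X) *
      (C ((a0^2*a1^2 - b^4/4 : ℝ) : ℂ) - C (((a0^2 + a1^2 : ℝ) : ℂ)) * X + X^2) := by
    rw [← Matrix.charpoly_reindex finProdFinEquiv, hA, key_charpoly]
    have e1 : ((b^2/2:ℝ):ℂ) + ((a0*a1:ℝ):ℂ) = ((b^2/2 + a0*a1:ℝ):ℂ) := by push_cast; ring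
    have e2 : ((b^2/2:ℝ):ℂ) - ((a0*a1:ℝ):ℂ) = ((b^2/2 - a0*a1:ℝ):ℂ) := by push_cast; ring
    have e3 : ((a0^2:ℝ):ℂ) * ((a1^2:ℝ):ℂ) - ((b^2/2:ℝ):ℂ)^2 = ((a0^2*a1^2 - b^4/4:ℝ):ℂ) := by
      push_cast; ring
    have e4 : ((a0^2:ℝ):ℂ) + ((a1^2:ℝ):ℂ) = ((a0^2+a1^2:ℝ):ℂ) := by push_cast; ring
    rw [e1, e2, e3, e4]
  refine ⟨h1, fun hb hne => ?_⟩
  have hb2 : b^2/2 ≠ |a0 * a1| := by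
    intro h
    exact hb (by rw [show 2 * |a0*a1| = b^2 by rw [← h]; ring, Real.sqrt_sq_eq_abs])
  rcases lt_or_gt_of_ne hb2 with hlt | hgt
  · -- b²/2 < |a0a1| : a linear factor has negative root
    refine ⟨b^2/2 - |a0*a1|, by linarith, ?_⟩
    rw [h1]
    simp only [IsRoot, eval_mul, eval_add, eval_sub, eval_pow, eval_C, eval_X]
    rcases lt_or_gt_of_ne hne with h0 | h0
    · apply mul_eq_zero_of_left
      apply mul_eq_zero_of_left
      rw [abs_of_neg h0]
      push_cast
      ring
    · apply mul_eq_zero_of_left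
      apply mul_eq_zero_of_right
      rw [abs_of_pos h0]
      push_cast
      ring
  · -- b²/2 > |a0a1| : the quadratic factor has a negative root
    set s : ℝ := a0^2 + a1^2 with hs
    set p : ℝ := a0^2*a1^2 - b^4/4 with hp
    have hpneg : p < 0 := by
      have h1' : (a0*a1)^2 < (b^2/2)^2 := by
        have := abs_nonneg (a0*a1)
        nlinarith [sq_abs (a0*a1)]
      rw [hp]; nlinarith
    have hsnn : 0 ≤ s := by rw [hs]; positivity
    have hD0 : 0 ≤ s^2 - 4*p := by nlinarith
    have hroot : Real.sqrt (s^2 - 4*p) ^ 2 = s^2 - 4*p := Real.sq_sqrt hD0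
    have hsgt : s < Real.sqrt (s^2 - 4*p) := by
      have h' : Real.sqrt (s^2) < Real.sqrt (s^2 - 4*p) :=
        Real.sqrt_lt_sqrt (by positivity) (by nlinarith)
      rwa [Real.sqrt_sq hsnn] at h'
    refine ⟨(s - Real.sqrt (s^2 - 4*p))/2, by linarith, ?_⟩
    rw [h1]
    simp only [IsRoot, eval_mul, eval_add, eval_sub, eval_pow, eval_C, eval_X]
    apply mul_eq_zero_of_right
    have hx : p - s * ((s - Real.sqrt (s^2 - 4*p))/2) + ((s - Real.sqrt (s^2 - 4*p))/2)^2 = 0 := by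
      linear_combination hroot / 4
    push_cast
    have hx' := congrArg (fun t : ℝ => (t : ℂ)) hx
    push_cast at hx' ⊢
    linear_combination hx'
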